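/- Let B be a finite left brace with |B| > 1 and Soc(B) = {0}, and let X ⊆ B be a transitive cycle base of B, regarded as a cycle set with operation x·y := λ_x^{-1}(y). Then the following are equivalent: (1) X is a simple cycle set; (2) every ideal I ≠ {0} of B acts transitively on X; (3) B has exactly one minimal non-trivial ideal I (an ideal I ≠ {0} such that no ideal J with {0} ⊊ J ⊊ I exists), and this I acts transitively on X. -/

import Mathlib

universe u

/-- A left brace structure on an additive abelian group `A`: a group operation `mul`
(with identity `one` and inverses `inv`) satisfying `a ∘ (b + c) + a = a ∘ b + a ∘ c`. -/
structure LeftBrace (A : Type*) [AddCommGroup A] where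
  mul : A → A → A
  one : A
  inv : A → A
  mul_assoc' : ∀ a b c, mul (mul a b) c = mul a (mul b c)
  one_mul' : ∀ a, mul one a = a
  mul_one' : ∀ a, mul a one = a
  inv_mul' : ∀ a, mul (inv a) a = one
  mul_inv' : ∀ a, mul a (inv a) = one
  compat : ∀ a b c, mul a (b + c) + a = mul a b + mul a c

namespace LeftBrace

variable {A : Type*} [AddCommGroup A]

/-- The map `λ_a : b ↦ -a + a ∘ b`. -/
def lam (B : LeftBrace A) (a b : A) : A := -a + B.mul a b

/-- The cycle set operation `x · y := λ_x⁻¹ (y)` associated to a left brace. -/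
noncomputable def cop (B : LeftBrace A) (x y : A) : A :=
  @Function.invFun A A ⟨0⟩ (B.lam x) y

/-- An ideal of a left brace: a normal subgroup of `(A, ∘)` invariant under all `λ_a`. -/
def IsIdeal (B : LeftBrace A) (I : Set A) : Prop :=
  B.one ∈ I ∧ (∀ a ∈ I, ∀ b ∈ I, B.mul a b ∈ I) ∧ (∀ a ∈ I, B.inv a ∈ I) ∧
    (∀ g : A, ∀ a ∈ I, B.mul (B.mul g a) (B.inv g) ∈ I) ∧
    (∀ g : A, ∀ a ∈ I, B.lam g a ∈ I)

end LeftBrace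

/-- A cycle set structure `op` on `X` is simple if `|X| > 1` and every surjective
cycle set homomorphism from `X` onto a cycle set `Y` with `|Y| > 1` is bijective. -/
def IsSimpleCycleSet {X : Type u} (op : X → X → X) : Prop :=
  1 < Nat.card X ∧
    ∀ (Y : Type u) (opY : Y → Y → Y),
      (∀ y, Function.Bijective (opY y)) →
      (∀ a b c, opY (opY a b) (opY a c) = opY (opY b a) (opY b c)) →
      ∀ f : X → Y, Function.Surjective f →
        (∀ a b, f (op a b) = opY (f a) (f b)) →
        1 < Nat.card Y → Function.Bijective f

/-!
Since `Soc(B) = 0`, the `λ`-action of `(B, ∘)` on `X` is faithful: an element acting trivially on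
the additive generators `X` acts trivially on `B`. Since `X` is `λ`-invariant and generates
`(B, +)`, it also generates `(B, ∘)`, because `a + b = a ∘ λ_{a⁻¹}(b)`.

(1 ⇒ 2) The orbits of an ideal `I` on `X` form a congruence of the cycle set `X`. If `I` is not
transitive the quotient has at least two points, so by simplicity the quotient map is injective:
`I` acts trivially on `X`, hence `I = 0`.

(2 ⇒ 1) Let `f : X → Y` be a surjective homomorphism. The maps `λ_{x⁻¹} = (x · -)` preserve the
fibres of `f`, hence, `X` being finite and generating, so does every `λ_a`; then
`K = {a | f ∘ λ_a = f}` is an ideal. If `f u = f v` with `u ≠ v`, then `u ∘ v⁻¹ ∈ K` is nonzero,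
so `K` acts transitively and `f` is constant.

(2 ⇔ 3) Two ideals acting transitively on `X` meet nontrivially, as both contain `λ_a(x) - x` for
all `a` and `x ∈ X`; hence two minimal ideals coincide.
-/

theorem IsSimpleCycleSet.injective_quotient_mk {X : Type u} [Finite X] {op : X → X → X}
    (h : IsSimpleCycleSet op) (hsurj : ∀ x, Function.Surjective (op x))
    (hlaw : ∀ a b c, op (op a b) (op a c) = op (op b a) (op b c)) (s : Setoid X)
    (hs : ∀ ⦃a a'⦄, s a a' → ∀ ⦃b b'⦄, s b b' → s (op a b) (op a' b'))
    (hcard : 1 < Nat.card (Quotient s)) : Function.Injective (Quotient.mk s) := by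
  let opQ : Quotient s → Quotient s → Quotient s := Quotient.map₂ op hs
  have hsurjQ (y : Quotient s) : Function.Surjective (opQ y) := by
    induction y using Quotient.ind with | _ x =>
    intro z
    induction z using Quotient.ind with | _ v =>
    obtain ⟨w, rfl⟩ := hsurj x v
    exact ⟨⟦w⟧, rfl⟩
  refine (h.2 _ opQ (fun y => ?_) (fun a b c => ?_) _ Quotient.mk_surjective (fun _ _ => rfl)
    hcard).1
  · exact ⟨Finite.injective_iff_surjective.mpr (hsurjQ y), hsurjQ y⟩
  · induction a, b, c using Quotient.inductionOn₃
    exact congrArg _ (hlaw _ _ _)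

namespace LeftBrace

variable {A : Type*} [AddCommGroup A]

section Arithmetic

variable (B : LeftBrace A)

theorem mul_zero (a : A) : B.mul a 0 = a := by
  simpa using (B.compat a 0 0).symm

theorem one_eq_zero : B.one = 0 := by
  simpa only [B.one_mul'] using (B.mul_zero B.one).symm

theorem zero_mul (a : A) : B.mul 0 a = a := by
  simpa [B.one_eq_zero] using B.one_mul' a

theorem mul_inv (a : A) : B.mul a (B.inv a) = 0 := B.one_eq_zero ▸ B.mul_inv' a

theorem inv_mul (a : A) : B.mul (B.inv a) a = 0 := B.one_eq_zero ▸ B.inv_mul' a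

theorem inv_mul_cancel_left (a b : A) : B.mul (B.inv a) (B.mul a b) = b := by
  rw [← B.mul_assoc', B.inv_mul, B.zero_mul]

theorem inv_eq_of_mul_eq_zero {a b : A} (h : B.mul a b = 0) : B.inv a = b := by
  rw [← B.inv_mul_cancel_left a b, h, B.mul_zero]

theorem inv_inv (a : A) : B.inv (B.inv a) = a := B.inv_eq_of_mul_eq_zero (B.inv_mul a)

theorem eq_of_mul_inv_eq_zero {a b : A} (h : B.mul a (B.inv b) = 0) : a = b := by
  rw [← B.inv_inv a, B.inv_eq_of_mul_eq_zero h, B.inv_inv]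

theorem mul_inv_rev (a b : A) : B.inv (B.mul a b) = B.mul (B.inv b) (B.inv a) :=
  B.inv_eq_of_mul_eq_zero <| by
    rw [B.mul_assoc', ← B.mul_assoc' b, B.mul_inv, B.zero_mul, B.mul_inv]

def lamHom (a : A) : A →+ A :=
  AddMonoidHom.mk' (B.lam a) fun b c => by
    simp only [lam]
    rw [eq_sub_of_add_eq (B.compat a b c)]
    abel

@[simp] theorem lamHom_apply (a b : A) : B.lamHom a b = B.lam a b := rfl

theorem lam_add (a b c : A) : B.lam a (b + c) = B.lam a b + B.lam a c := map_add (B.lamHom a) b c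

theorem lam_zero (a : A) : B.lam a 0 = 0 := map_zero (B.lamHom a)

theorem zero_lam (b : A) : B.lam 0 b = b := by simp [lam, B.zero_mul]

theorem mul_eq_add_lam (a b : A) : B.mul a b = a + B.lam a b := by simp [lam]

theorem lam_mul (a b c : A) : B.lam (B.mul a b) c = B.lam a (B.lam b c) := by
  have hneg : B.mul a (-b) = a + a - B.mul a b := by
    have h := B.compat a b (-b)
    rw [add_neg_cancel, B.mul_zero] at h
    rw [eq_sub_iff_add_eq, add_comm, h]
  simp only [lam]
  rw [B.mul_assoc', eq_sub_of_add_eq (B.compat a _ _), hneg]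
  abel

theorem lam_inv_lam (a b : A) : B.lam (B.inv a) (B.lam a b) = b := by
  rw [← B.lam_mul, B.inv_mul, B.zero_lam]

theorem lam_lam_inv (a b : A) : B.lam a (B.lam (B.inv a) b) = b := by
  rw [← B.lam_mul, B.mul_inv, B.zero_lam]

theorem lam_inv_self (a : A) : B.lam a (B.inv a) = -a := by
  simp [lam, B.mul_inv]

theorem add_eq_mul_lam (a b : A) : a + b = B.mul a (B.lam (B.inv a) b) := by
  rw [B.mul_eq_add_lam, B.lam_lam_inv]

theorem inv_mul_eq_lam_sub (a b : A) : B.mul (B.inv a) b = B.lam (B.inv a) (b - a) :=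
  calc B.mul (B.inv a) b = B.mul (B.inv a) a + B.lam (B.inv a) (b - a) := by
        rw [B.mul_eq_add_lam, B.mul_eq_add_lam, add_assoc, ← B.lam_add, add_sub_cancel]
    _ = B.lam (B.inv a) (b - a) := by rw [B.inv_mul, zero_add]

theorem cop_eq (x y : A) : B.cop x y = B.lam (B.inv x) y :=
  Function.LeftInverse.injective (B.lam_inv_lam x) <| by
    rw [cop, Function.invFun_eq ⟨_, B.lam_lam_inv x y⟩, B.lam_lam_inv]

theorem inv_cop_mul_inv (x y : A) :
    B.mul (B.inv (B.cop x y)) (B.inv x) = B.inv (x + y) := by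
  rw [B.cop_eq, ← B.mul_inv_rev, ← B.add_eq_mul_lam]

end Arithmetic

def soc (B : LeftBrace A) : Set A := {a | ∀ b, a + b = B.mul a b}

variable {B : LeftBrace A} {X I J : Set A}

namespace IsIdeal

theorem zero_mem (hI : B.IsIdeal I) : (0 : A) ∈ I := B.one_eq_zero ▸ hI.1

theorem mul_mem (hI : B.IsIdeal I) {a b : A} (ha : a ∈ I) (hb : b ∈ I) : B.mul a b ∈ I :=
  hI.2.1 a ha b hb

theorem inv_mem (hI : B.IsIdeal I) {a : A} (ha : a ∈ I) : B.inv a ∈ I := hI.2.2.1 a ha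

theorem lam_mem (hI : B.IsIdeal I) (g : A) {a : A} (ha : a ∈ I) : B.lam g a ∈ I :=
  hI.2.2.2.2 g a ha

theorem inv_mul_mul_mem (hI : B.IsIdeal I) (g : A) {a : A} (ha : a ∈ I) :
    B.mul (B.mul (B.inv g) a) g ∈ I := by
  simpa only [B.inv_inv] using hI.2.2.2.1 (B.inv g) a ha

theorem add_mem (hI : B.IsIdeal I) {a b : A} (ha : a ∈ I) (hb : b ∈ I) : a + b ∈ I :=
  B.add_eq_mul_lam a b ▸ hI.mul_mem ha (hI.lam_mem _ hb)

theorem neg_mem (hI : B.IsIdeal I) {a : A} (ha : a ∈ I) : -a ∈ I :=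
  B.lam_inv_self a ▸ hI.lam_mem a (hI.inv_mem ha)

theorem lam_sub_mem (hI : B.IsIdeal I) {a : A} (ha : a ∈ I) (b : A) : B.lam a b - b ∈ I := by
  have hc := hI.lam_mem b (hI.inv_mul_mul_mem b ha)
  rw [B.mul_assoc', B.inv_mul_eq_lam_sub, B.lam_lam_inv, B.mul_eq_add_lam] at hc
  simpa only [show a + B.lam a b - b + -a = B.lam a b - b by abel] using
    hI.add_mem hc (hI.neg_mem ha)

theorem inv_mul_mem_of_sub_mem (hI : B.IsIdeal I) {a b : A} (h : b - a ∈ I) :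
    B.mul (B.inv a) b ∈ I :=
  B.inv_mul_eq_lam_sub a b ▸ hI.lam_mem _ h

theorem singleton_zero_ssubset_iff (hI : B.IsIdeal I) : {0} ⊂ I ↔ I ≠ {0} := by
  rw [Set.ssubset_iff_subset_ne, Set.singleton_subset_iff, ne_comm]
  exact and_iff_right hI.zero_mem

theorem inter (hI : B.IsIdeal I) (hJ : B.IsIdeal J) : B.IsIdeal (I ∩ J) :=
  ⟨⟨hI.1, hJ.1⟩, fun _ ha _ hb => ⟨hI.mul_mem ha.1 hb.1, hJ.mul_mem ha.2 hb.2⟩,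
    fun _ ha => ⟨hI.inv_mem ha.1, hJ.inv_mem ha.2⟩,
    fun g a ha => ⟨hI.2.2.2.1 g a ha.1, hJ.2.2.2.1 g a ha.2⟩,
    fun g _ ha => ⟨hI.lam_mem g ha.1, hJ.lam_mem g ha.2⟩⟩

end IsIdeal

theorem isIdeal_univ : B.IsIdeal Set.univ := by
  refine ⟨trivial, ?_, ?_, ?_, ?_⟩ <;> intros <;> trivial

theorem eq_zero_of_forall_lam_eq (hsoc : B.soc = {0})
    (hgen : AddSubgroup.closure X = ⊤) {a : A} (h : ∀ x ∈ X, B.lam a x = x) : a = 0 := by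
  have hid : B.lamHom a = AddMonoidHom.id A := AddMonoidHom.eq_of_eqOn_dense hgen h
  have hsoc_mem : a ∈ B.soc := fun b => by
    rw [B.mul_eq_add_lam, ← B.lamHom_apply, hid, AddMonoidHom.id_apply]
  rwa [hsoc] at hsoc_mem

theorem eq_univ_of_mul_mem [Finite A] (hX : ∀ a, Set.MapsTo (B.lam a) X X)
    (hgen : AddSubgroup.closure X = ⊤) {S : Set A} (hXS : X ⊆ S) (h0 : (0 : A) ∈ S)
    (hmul : ∀ a ∈ S, ∀ b ∈ S, B.mul a b ∈ S) : S = Set.univ := by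
  -- the `λ`-invariant core of `S` is additively closed, since `a + b = a ∘ λ_{a⁻¹}(b)`
  let T : AddSubmonoid A :=
    { carrier := {a | ∀ g, B.lam g a ∈ S}
      zero_mem' := fun g => (B.lam_zero g).symm ▸ h0
      add_mem' := fun {a b} ha hb g => by
        rw [B.lam_add, B.add_eq_mul_lam, ← B.lam_mul]
        exact hmul _ (ha g) _ (hb _) }
  have hT : AddSubmonoid.closure X ≤ T :=
    AddSubmonoid.closure_le.mpr fun x hx g => hXS (hX g hx)
  rw [← AddSubgroup.closure_toAddSubmonoid_of_finite, hgen] at hT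
  exact Set.eq_univ_of_forall fun a => B.zero_lam a ▸ hT (AddSubgroup.mem_top a) 0

theorem mapsTo_of_forall_mapsTo_inv [Finite A] (hX : ∀ a, Set.MapsTo (B.lam a) X X)
    (hgen : AddSubgroup.closure X = ⊤) {α : Type*} (e : A → α → α)
    (he_mul : ∀ a b, e (B.mul a b) = e a ∘ e b) (he_zero : e 0 = id) {t : Set α}
    (ht : t.Finite) (hinv : ∀ x ∈ X, Set.MapsTo (e (B.inv x)) t t) (a : A) :
    Set.MapsTo (e a) t t := by
  suffices hS : {a | Set.MapsTo (e a) t t} = Set.univ from Set.eq_univ_iff_forall.mp hS a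
  refine eq_univ_of_mul_mem hX hgen (fun x hx => ?_)
    (show Set.MapsTo (e 0) t t from he_zero ▸ Set.mapsTo_id t)
    fun a ha b hb => show Set.MapsTo (e (B.mul a b)) t t from (he_mul a b).symm ▸ ha.comp hb
  -- `e x⁻¹` maps the finite set `t` injectively into itself, hence onto it, and `e x` inverts it
  have hleft : Function.LeftInverse (e x) (e (B.inv x)) := fun y => by
    rw [← Function.comp_apply (f := e x), ← he_mul, B.mul_inv, he_zero, id]
  have hsurj := ((ht.injOn_iff_bijOn_of_mapsTo (hinv x hx)).mp hleft.injective.injOn).surjOn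
  intro y hy
  obtain ⟨z, hz, rfl⟩ := hsurj hy
  rwa [hleft]

def ActsTransitively (B : LeftBrace A) (I X : Set A) : Prop :=
  ∀ x ∈ X, ∀ y ∈ X, ∃ a ∈ I, B.lam a x = y

theorem exists_lam_ne [Nontrivial A] (hsoc : B.soc = {0})
    (hgen : AddSubgroup.closure X = ⊤) : ∃ a, ∃ x ∈ X, B.lam a x ≠ x := by
  obtain ⟨a, ha⟩ := exists_ne (0 : A)
  by_contra! h
  exact ha (eq_zero_of_forall_lam_eq hsoc hgen (h a))

section CycleBase

variable (hX : ∀ a, Set.MapsTo (B.lam a) X X)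
include hX

def lamX (a : A) : X → X := (hX a).restrict

def lamKer {Y : Type*} (f : X → Y) : Set A := {a | ∀ u, f (lamX hX a u) = f u}

@[simp] theorem coe_lamX (a : A) (u : X) : (lamX hX a u : A) = B.lam a u := rfl

theorem lamX_mul (a b : A) : lamX hX (B.mul a b) = lamX hX a ∘ lamX hX b :=
  funext fun u => Subtype.ext (B.lam_mul a b u)

theorem lamX_mul_apply (a b : A) (u : X) : lamX hX (B.mul a b) u = lamX hX a (lamX hX b u) :=
  Subtype.ext (B.lam_mul a b u)

theorem lamX_zero : lamX hX 0 = id := funext fun u => Subtype.ext (B.zero_lam u)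

theorem lamX_inv_lamX (a : A) (u : X) : lamX hX (B.inv a) (lamX hX a u) = u :=
  Subtype.ext (B.lam_inv_lam a u)

theorem lamX_lamX_inv (a : A) (u : X) : lamX hX a (lamX hX (B.inv a) u) = u :=
  Subtype.ext (B.lam_lam_inv a u)

theorem one_lt_card_of_soc_eq_zero [Finite A] [Nontrivial A] (hsoc : B.soc = {0})
    (hgen : AddSubgroup.closure X = ⊤) : 1 < Nat.card X := by
  obtain ⟨a, x, hx, hax⟩ := exists_lam_ne hsoc hgen
  exact Finite.one_lt_card_iff_nontrivial.mpr
    ⟨lamX hX a ⟨x, hx⟩, ⟨x, hx⟩, fun h => hax (congrArg Subtype.val h)⟩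

def orbitSetoid (hI : B.IsIdeal I) : Setoid X where
  r u v := ∃ a ∈ I, lamX hX a u = v
  iseqv :=
    { refl u := ⟨0, hI.zero_mem, by rw [lamX_zero, id]⟩
      symm := fun ⟨a, ha, hav⟩ => ⟨B.inv a, hI.inv_mem ha, hav ▸ lamX_inv_lamX hX a _⟩
      trans := fun ⟨a, ha, hav⟩ ⟨b, hb, hbw⟩ =>
        ⟨B.mul b a, hI.mul_mem hb ha, by rw [lamX_mul_apply, hav, hbw]⟩ }

variable {opX : X → X → X} (hopX : ∀ x y : X, (opX x y : A) = B.cop x y)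
include hopX

theorem opX_eq_lamX (x y : X) : opX x y = lamX hX (B.inv x) y :=
  Subtype.ext ((hopX x y).trans (B.cop_eq x y))

theorem opX_opX_opX (x y z : X) : opX (opX x y) (opX x z) = opX (opX y x) (opX y z) := by
  have key (x y : X) : opX (opX x y) (opX x z) = lamX hX (B.inv (x + y : A)) z := by
    rw [opX_eq_lamX hX hopX (opX x y), opX_eq_lamX hX hopX x z, ← lamX_mul_apply, hopX,
      B.inv_cop_mul_inv]
  rw [key, key, add_comm]

theorem surjective_opX (x : X) : Function.Surjective (opX x) :=
  fun v => ⟨lamX hX x v, by rw [opX_eq_lamX hX hopX, lamX_inv_lamX]⟩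

theorem orbitSetoid_opX (hI : B.IsIdeal I) ⦃u u' : X⦄ (hu : orbitSetoid hX hI u u')
    ⦃v v' : X⦄ (hv : orbitSetoid hX hI v v') : orbitSetoid hX hI (opX u v) (opX u' v') := by
  obtain ⟨a, ha, rfl⟩ := hu
  obtain ⟨b, hb, rfl⟩ := hv
  -- move `v` to `v'` using `u⁻¹ ∘ b ∘ u`, then `u` to `u'` using `u'⁻¹ ∘ u`, which lies in `I`
  -- because `u' - u ∈ I`
  have hu : B.mul (B.inv u) (lamX hX a u : A) ∈ I :=
    hI.inv_mul_mem_of_sub_mem (hI.lam_sub_mem ha u)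
  refine (orbitSetoid hX hI).trans' (y := opX u (lamX hX b v))
    ⟨B.mul (B.mul (B.inv u) b) u, hI.inv_mul_mul_mem u hb, ?_⟩
    ⟨B.inv (B.mul (B.inv u) (lamX hX a u : A)), hI.inv_mem hu, ?_⟩
  · rw [opX_eq_lamX hX hopX, opX_eq_lamX hX hopX, ← lamX_mul_apply, ← lamX_mul_apply,
      B.mul_assoc', B.mul_inv, B.mul_zero]
  · rw [opX_eq_lamX hX hopX, opX_eq_lamX hX hopX, ← lamX_mul_apply, B.mul_inv_rev, B.inv_inv,
      B.mul_assoc', B.mul_inv, B.mul_zero]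

variable {Y : Type*} {opY : Y → Y → Y} {f : X → Y} (hf : ∀ a b, f (opX a b) = opY (f a) (f b))
include hf

theorem apply_lamX_inv_eq {p q u v : X} (hpq : f p = f q) (huv : f u = f v) :
    f (lamX hX (B.inv p) u) = f (lamX hX (B.inv q) v) := by
  rw [← opX_eq_lamX hX hopX, ← opX_eq_lamX hX hopX, hf, hf, hpq, huv]

variable [Finite A] (hgen : AddSubgroup.closure X = ⊤)
include hgen

theorem apply_lamX_eq_of_apply_eq (a : A) {u v : X} (huv : f u = f v) :
    f (lamX hX a u) = f (lamX hX a v) := by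
  have hmaps := mapsTo_of_forall_mapsTo_inv hX hgen (fun a => Prod.map (lamX hX a) (lamX hX a))
    (fun a b => by rw [lamX_mul, Prod.map_comp_map]) (by rw [lamX_zero, Prod.map_id])
    (Set.toFinite {p : X × X | f p.1 = f p.2})
    (fun x hx p hp => apply_lamX_inv_eq hX hopX hf (p := ⟨x, hx⟩) rfl hp) a
  exact hmaps (show (u, v) ∈ {p : X × X | f p.1 = f p.2} from huv)

theorem apply_eq_of_apply_lamX_eq (a : A) {u v : X} (h : f (lamX hX a u) = f (lamX hX a v)) :
    f u = f v := by
  simpa only [lamX_inv_lamX] using apply_lamX_eq_of_apply_eq hX hopX hf hgen (B.inv a) h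

theorem apply_lamX_eq_apply_lamX {p q : X} (hpq : f p = f q) (u : X) :
    f (lamX hX p u) = f (lamX hX q u) := by
  apply apply_eq_of_apply_lamX_eq hX hopX hf hgen (B.inv q)
  rw [lamX_inv_lamX, ← apply_lamX_inv_eq hX hopX hf hpq rfl, lamX_inv_lamX]

theorem lam_inv_mem_lamKer {k : A} (hk : k ∈ lamKer hX f) (y : X) :
    B.lam (B.inv y) k ∈ lamKer hX f := by
  -- `x := λ_{k⁻¹}(y)` satisfies `k ∘ x = k + y = y ∘ λ_{y⁻¹}(k)` and `f x = f y`
  set x := lamX hX (B.inv k) y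
  have hkx : lamX hX k x = y := lamX_lamX_inv hX k y
  have hmul : B.mul k x = B.mul y (B.lam (B.inv y) k) := by
    rw [B.mul_eq_add_lam, ← coe_lamX hX, hkx, add_comm, B.add_eq_mul_lam]
  have hfx : f x = f y := (hk x).symm.trans (congrArg f hkx)
  intro u
  apply apply_eq_of_apply_lamX_eq hX hopX hf hgen y
  calc f (lamX hX y (lamX hX (B.lam (B.inv y) k) u)) = f (lamX hX k (lamX hX x u)) := by
        rw [← lamX_mul_apply, ← hmul, lamX_mul_apply]
    _ = f (lamX hX x u) := hk _
    _ = f (lamX hX y u) := apply_lamX_eq_apply_lamX hX hopX hf hgen hfx u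

theorem isIdeal_lamKer : B.IsIdeal (lamKer hX f) := by
  refine ⟨fun u => ?_, fun a ha b hb u => ?_, fun a ha u => ?_, fun g a ha u => ?_,
    fun g a ha => ?_⟩
  · rw [B.one_eq_zero, lamX_zero, id]
  · rw [lamX_mul_apply, ha, hb]
  · simpa only [lamX_lamX_inv] using (ha (lamX hX (B.inv a) u)).symm
  · rw [lamX_mul_apply, lamX_mul_apply, apply_lamX_eq_of_apply_eq hX hopX hf hgen g (ha _),
      lamX_lamX_inv]
  · exact mapsTo_of_forall_mapsTo_inv hX hgen B.lam (fun a b => funext (B.lam_mul a b))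
      (funext B.zero_lam) (Set.toFinite _)
      (fun y hy _ hk => lam_inv_mem_lamKer hX hopX hf hgen hk ⟨y, hy⟩) g ha

theorem mul_inv_mem_lamKer {u v : X} (huv : f u = f v) : B.mul u (B.inv v) ∈ lamKer hX f :=
  fun w => by
    rw [lamX_mul_apply, apply_lamX_eq_of_apply_eq hX hopX hf hgen u
      (apply_lamX_inv_eq hX hopX hf huv.symm rfl), lamX_lamX_inv]

end CycleBase

theorem actsTransitively_of_isSimpleCycleSet [Finite A]
    (hsoc : B.soc = {0}) (hX : ∀ a, Set.MapsTo (B.lam a) X X)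
    (hgen : AddSubgroup.closure X = ⊤) {opX : X → X → X}
    (hopX : ∀ x y : X, (opX x y : A) = B.cop x y) (hsimple : IsSimpleCycleSet opX)
    (hI : B.IsIdeal I) (hI0 : I ≠ {0}) : B.ActsTransitively I X := by
  by_contra hntr
  have hcard : 1 < Nat.card (Quotient (orbitSetoid hX hI)) := by
    obtain ⟨x, hx, y, hy, hxy⟩ : ∃ x ∈ X, ∃ y ∈ X, ∀ a ∈ I, B.lam a x ≠ y := by
      simpa [ActsTransitively] using hntr
    refine Finite.one_lt_card_iff_nontrivial.mpr ⟨⟦⟨x, hx⟩⟧, ⟦⟨y, hy⟩⟧, fun h => ?_⟩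
    obtain ⟨a, ha, hay⟩ := Quotient.exact h
    exact hxy a ha (congrArg Subtype.val hay)
  have hinj := hsimple.injective_quotient_mk (surjective_opX hX hopX) (opX_opX_opX hX hopX) _
    (orbitSetoid_opX hX hopX hI) hcard
  refine hI0 (Set.eq_singleton_iff_unique_mem.mpr ⟨hI.zero_mem, fun a ha => ?_⟩)
  refine eq_zero_of_forall_lam_eq hsoc hgen fun x hx => ?_
  have hrel : orbitSetoid hX hI ⟨x, hx⟩ (lamX hX a ⟨x, hx⟩) := ⟨a, ha, rfl⟩
  exact congrArg Subtype.val (hinj (Quotient.sound hrel)).symm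

theorem isSimpleCycleSet_of_forall_actsTransitively [Finite A] [Nontrivial A]
    (hsoc : B.soc = {0}) (hX : ∀ a, Set.MapsTo (B.lam a) X X)
    (hgen : AddSubgroup.closure X = ⊤) {opX : X → X → X}
    (hopX : ∀ x y : X, (opX x y : A) = B.cop x y)
    (htr : ∀ I, B.IsIdeal I → I ≠ {0} → B.ActsTransitively I X) : IsSimpleCycleSet opX := by
  refine ⟨one_lt_card_of_soc_eq_zero hX hsoc hgen,
    fun Y opY _ _ f hsurj hf hY => ⟨fun u v huv => ?_, hsurj⟩⟩
  by_contra hne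
  have hK : lamKer hX f ≠ {0} := fun h => hne <| Subtype.ext <| B.eq_of_mul_inv_eq_zero <|
    Set.mem_singleton_iff.mp (h ▸ mul_inv_mem_lamKer hX hopX hf hgen huv)
  have : Finite Y := Finite.of_surjective f hsurj
  obtain ⟨y₁, y₂, hy⟩ := Finite.one_lt_card_iff_nontrivial.mp hY
  obtain ⟨w₁, rfl⟩ := hsurj y₁
  obtain ⟨w₂, rfl⟩ := hsurj y₂
  obtain ⟨a, ha, haw⟩ := htr _ (isIdeal_lamKer hX hopX hf hgen) hK w₁ w₁.2 w₂ w₂.2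
  exact hy ((ha w₁).symm.trans (congrArg f (Subtype.ext haw)))

def IsMinimalIdeal (B : LeftBrace A) (I : Set A) : Prop :=
  B.IsIdeal I ∧ I ≠ {0} ∧ ¬ ∃ J : Set A, B.IsIdeal J ∧ {(0 : A)} ⊂ J ∧ J ⊂ I

theorem isMinimalIdeal_iff_minimal :
    B.IsMinimalIdeal I ↔ Minimal (fun J => B.IsIdeal J ∧ J ≠ {0}) I := by
  constructor
  · rintro ⟨hI, hI0, hmin⟩
    refine ⟨⟨hI, hI0⟩, fun J ⟨hJ, hJ0⟩ hJI => ?_⟩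
    by_contra hIJ
    exact hmin ⟨J, hJ, hJ.singleton_zero_ssubset_iff.mpr hJ0, hJI.ssubset_of_not_subset hIJ⟩
  · rintro ⟨⟨hI, hI0⟩, hmin⟩
    exact ⟨hI, hI0, fun ⟨J, hJ, hJ0, hJI⟩ =>
      hJI.2 (hmin ⟨hJ, hJ.singleton_zero_ssubset_iff.mp hJ0⟩ hJI.1)⟩

theorem exists_isMinimalIdeal_subset [Finite A] (hI : B.IsIdeal I) (hI0 : I ≠ {0}) :
    ∃ M ⊆ I, B.IsMinimalIdeal M := by
  obtain ⟨M, hMI, hM⟩ :=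
    exists_minimal_le_of_wellFoundedLT (fun J => B.IsIdeal J ∧ J ≠ {0}) I ⟨hI, hI0⟩
  exact ⟨M, hMI, isMinimalIdeal_iff_minimal.mpr hM⟩

theorem ActsTransitively.mono (h : B.ActsTransitively I X) (hIJ : I ⊆ J) :
    B.ActsTransitively J X := fun x hx y hy =>
  let ⟨a, ha, hay⟩ := h x hx y hy
  ⟨a, hIJ ha, hay⟩

theorem ActsTransitively.sub_mem (h : B.ActsTransitively I X) (hI : B.IsIdeal I) {x y : A}
    (hx : x ∈ X) (hy : y ∈ X) : y - x ∈ I := by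
  obtain ⟨a, ha, rfl⟩ := h x hx y hy
  exact hI.lam_sub_mem ha x

theorem inter_ne_zero_of_actsTransitively [Nontrivial A]
    (hsoc : B.soc = {0}) (hX : ∀ a, Set.MapsTo (B.lam a) X X)
    (hgen : AddSubgroup.closure X = ⊤) (hI : B.IsIdeal I) (hJ : B.IsIdeal J)
    (hIX : B.ActsTransitively I X) (hJX : B.ActsTransitively J X) : I ∩ J ≠ {0} := by
  intro hIJ
  obtain ⟨a, x, hx, hax⟩ := exists_lam_ne hsoc hgen
  have hmem : B.lam a x - x ∈ I ∩ J := ⟨hIX.sub_mem hI hx (hX a hx), hJX.sub_mem hJ hx (hX a hx)⟩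
  rw [hIJ] at hmem
  exact hax (sub_eq_zero.mp hmem)

theorem forall_actsTransitively_iff [Finite A] [Nontrivial A]
    (hsoc : B.soc = {0}) (hX : ∀ a, Set.MapsTo (B.lam a) X X)
    (hgen : AddSubgroup.closure X = ⊤) :
    (∀ I, B.IsIdeal I → I ≠ {0} → B.ActsTransitively I X) ↔
      ∃ I, B.IsMinimalIdeal I ∧ (∀ J, B.IsMinimalIdeal J → J = I) ∧ B.ActsTransitively I X := by
  constructor
  · intro htr
    obtain ⟨M, -, hM⟩ := exists_isMinimalIdeal_subset (B := B) isIdeal_univ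
      Set.nontrivial_univ.ne_singleton
    refine ⟨M, hM, fun J hJ => ?_, htr M hM.1 hM.2.1⟩
    -- two minimal ideals acting transitively meet nontrivially, so both equal their intersection
    have hJM : B.IsIdeal (J ∩ M) ∧ J ∩ M ≠ {0} := ⟨hJ.1.inter hM.1,
      inter_ne_zero_of_actsTransitively hsoc hX hgen hJ.1 hM.1 (htr J hJ.1 hJ.2.1)
        (htr M hM.1 hM.2.1)⟩
    rw [isMinimalIdeal_iff_minimal] at hJ hM
    exact (hJ.eq_of_le hJM Set.inter_subset_left).symm.trans
      (hM.eq_of_le hJM Set.inter_subset_right)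
  · rintro ⟨I, -, hunique, hIX⟩ L hL hL0
    obtain ⟨M, hML, hM⟩ := exists_isMinimalIdeal_subset hL hL0
    exact hIX.mono (hunique M hM ▸ hML)

end LeftBrace

theorem stmt11_general {A : Type u} [AddCommGroup A] [Finite A] (B : LeftBrace A)
    (hcard : 1 < Nat.card A)
    -- Soc(B) = {0}
    (hsoc : {a : A | ∀ b, a + b = B.mul a b} = {0})
    -- X is a transitive cycle base: an orbit of the λ-action generating (A, +)
    (X : Set A)
    (hclosed : ∀ a : A, ∀ x ∈ X, B.lam a x ∈ X)
    (hgen : AddSubgroup.closure X = ⊤)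
    -- the cycle set operation on X, x · y = λ_x⁻¹(y)
    (opX : X → X → X)
    (hopX : ∀ x y : X, ((opX x y : X) : A) = B.cop (x : A) (y : A)) :
    -- (1) ↔ (2)
    (IsSimpleCycleSet opX ↔
      ∀ I : Set A, B.IsIdeal I → I ≠ {0} →
        ∀ x ∈ X, ∀ y ∈ X, ∃ a ∈ I, B.lam a x = y) ∧
    -- (1) ↔ (3)
    (IsSimpleCycleSet opX ↔
      ∃ I : Set A,
        (B.IsIdeal I ∧ I ≠ {0} ∧
          ¬ ∃ J : Set A, B.IsIdeal J ∧ {(0 : A)} ⊂ J ∧ J ⊂ I) ∧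
        (∀ J : Set A,
          (B.IsIdeal J ∧ J ≠ {0} ∧
            ¬ ∃ K : Set A, B.IsIdeal K ∧ {(0 : A)} ⊂ K ∧ K ⊂ J) → J = I) ∧
        (∀ x ∈ X, ∀ y ∈ X, ∃ a ∈ I, B.lam a x = y)) := by
  have : Nontrivial A := Finite.one_lt_card_iff_nontrivial.mp hcard
  have h12 : IsSimpleCycleSet opX ↔
      ∀ I : Set A, B.IsIdeal I → I ≠ {0} → B.ActsTransitively I X :=
    ⟨fun hsimple _ hI hI0 => LeftBrace.actsTransitively_of_isSimpleCycleSet hsoc hclosed hgen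
        hopX hsimple hI hI0,
      LeftBrace.isSimpleCycleSet_of_forall_actsTransitively hsoc hclosed hgen hopX⟩
  exact ⟨h12, h12.trans (LeftBrace.forall_actsTransitively_iff hsoc hclosed hgen)⟩

theorem stmt11 {A : Type u} [AddCommGroup A] [Finite A] (B : LeftBrace A)
    (hcard : 1 < Nat.card A)
    -- Soc(B) = {0}
    (hsoc : {a : A | ∀ b, a + b = B.mul a b} = {0})
    -- X is a transitive cycle base: an orbit of the λ-action generating (A, +)
    (X : Set A) (hne : X.Nonempty)
    (hclosed : ∀ a : A, ∀ x ∈ X, B.lam a x ∈ X)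
    (horbit : ∀ x ∈ X, ∀ y ∈ X, ∃ a : A, B.lam a x = y)
    (hgen : AddSubgroup.closure X = ⊤)
    -- the cycle set operation on X, x · y = λ_x⁻¹(y)
    (opX : X → X → X)
    (hopX : ∀ x y : X, ((opX x y : X) : A) = B.cop (x : A) (y : A)) :
    -- (1) ↔ (2)
    (IsSimpleCycleSet opX ↔
      ∀ I : Set A, B.IsIdeal I → I ≠ {0} →
        ∀ x ∈ X, ∀ y ∈ X, ∃ a ∈ I, B.lam a x = y) ∧
    -- (1) ↔ (3)
    (IsSimpleCycleSet opX ↔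
      ∃ I : Set A,
        (B.IsIdeal I ∧ I ≠ {0} ∧
          ¬ ∃ J : Set A, B.IsIdeal J ∧ {(0 : A)} ⊂ J ∧ J ⊂ I) ∧
        (∀ J : Set A,
          (B.IsIdeal J ∧ J ≠ {0} ∧
            ¬ ∃ K : Set A, B.IsIdeal K ∧ {(0 : A)} ⊂ K ∧ K ⊂ J) → J = I) ∧
        (∀ x ∈ X, ∀ y ∈ X, ∃ a ∈ I, B.lam a x = y)) :=
  stmt11_general B hcard hsoc X hclosed hgen opX hopX
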